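/- For the disagreement chain of the noisy voter model started from the all-ones configuration, the probability of disagreement at any site decays exponentially at rate 2δ/(2δ+1): for every t ≥ 0, max_{v ∈ V(G)} P(Z_t(v) = 1) ≤ exp(−(2δ/(2δ+1))·t). -/

import Mathlib

open Finset

/-- Flip rate of the disagreement chain of the noisy voter model at vertex `v` in
configuration `η`: `(2δ/(2δ+1))·1{η(v)=1} + (1/(2δ+1))·(1/d(v))·#{u ~ v : η(u) ≠ η(v)}`. -/
noncomputable def dzRate {V : Type*} [Fintype V] (G : SimpleGraph V) [DecidableRel G.Adj]
    (δ : ℝ) (v : V) (η : V → Bool) : ℝ :=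
  (2 * δ / (2 * δ + 1)) * (if η v = true then 1 else 0) +
    (1 / (2 * δ + 1)) * (1 / (G.degree v : ℝ)) *
      ((Finset.univ.filter fun u => G.Adj v u ∧ η u ≠ η v).card : ℝ)

/-- The rate matrix of the disagreement chain: single-spin flips occur at rate `dzRate`,
transitions changing two or more spins have rate `0`, and diagonal entries make rows sum to `0`. -/
noncomputable def dzQ {V : Type*} [Fintype V] [DecidableEq V] (G : SimpleGraph V)
    [DecidableRel G.Adj] (δ : ℝ) : Matrix (V → Bool) (V → Bool) ℝ := fun η η' =>
  if η = η' then -∑ v, dzRate G δ v η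
  else if (Finset.univ.filter fun v => η v ≠ η' v).card = 1 then
    ∑ v ∈ Finset.univ.filter (fun v => η v ≠ η' v), dzRate G δ v η
  else 0

/-- `P(Z_t(v) = 1)`: the probability that the disagreement chain started from the all-ones
configuration has a disagreement (spin `1`) at vertex `v` at time `t`. -/
noncomputable def probDisagree {V : Type*} [Fintype V] [DecidableEq V] (G : SimpleGraph V)
    [DecidableRel G.Adj] (δ : ℝ) (t : ℝ) (v : V) : ℝ :=
  ∑ η ∈ Finset.univ.filter (fun η : V → Bool => η v = true),
    NormedSpace.exp (t • dzQ G δ) (fun _ => true) η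

/-!
Let `W η v = 1{η(v) = 1}`. Since the disagreement chain only flips single spins, `Q_Z W = W M`
with `M = -I + (2δ+1)⁻¹ A D⁻¹`: a spin is switched off at rate `2δ/(2δ+1)` and copies each
neighbouring spin at rate `(2δ+1)⁻¹ d(v)⁻¹`. Hence `Q_Zⁿ W = W Mⁿ`, and as the row of `W` at `1̄`
is the all-ones vector, which is a left eigenvector of `M` with eigenvalue `-2δ/(2δ+1)`
(the columns of `A D⁻¹` sum to one), `P(Z_t(v) = 1) = (e^{tQ_Z} W)(1̄, v) = e^{-2δt/(2δ+1)}`.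
-/

theorem ContinuousLinearMap.map_exp_of_map_pow {𝔸 : Type*} [NormedRing 𝔸] [NormedAlgebra ℝ 𝔸]
    [CompleteSpace 𝔸] (L : 𝔸 →L[ℝ] ℝ) {a : 𝔸} {r : ℝ} (h : ∀ n, L (a ^ n) = r ^ n) :
    L (NormedSpace.exp a) = Real.exp r := by
  have hL := (NormedSpace.exp_series_hasSum_exp' (𝕂 := ℝ) a).mapL L
  simp only [map_smul, h] at hL
  rw [Real.exp_eq_exp_ℝ]
  exact hL.unique (NormedSpace.exp_series_hasSum_exp' r)

namespace Matrix

variable {m n R : Type*} [Fintype m] [DecidableEq m] [Fintype n] [DecidableEq n]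

theorem pow_mul_eq_mul_pow_of_mul_eq [Semiring R] {Q : Matrix m m R} {W : Matrix m n R}
    {M : Matrix n n R} (h : Q * W = W * M) (k : ℕ) : Q ^ k * W = W * M ^ k := by
  induction k with
  | zero => simp
  | succ k ih => rw [pow_succ, pow_succ, Matrix.mul_assoc, h, ← Matrix.mul_assoc, ih,
      Matrix.mul_assoc]

theorem vecMul_pow_of_vecMul_eq_smul [CommSemiring R] {x : n → R} {M : Matrix n n R} {c : R}
    (h : x ᵥ* M = c • x) (k : ℕ) : x ᵥ* (M ^ k) = c ^ k • x := by
  induction k with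
  | zero => simp
  | succ k ih => rw [pow_succ, ← vecMul_vecMul, ih, smul_vecMul, h, smul_smul, pow_succ]

end Matrix

section SpinFlip

variable {V : Type*} [DecidableEq V]

/-- The configuration `η^u`. -/
def spinFlip (η : V → Bool) (u : V) : V → Bool := Function.update η u (!η u)

theorem spinFlip_apply_of_ne (η : V → Bool) {u w : V} (h : w ≠ u) : spinFlip η u w = η w :=
  Function.update_of_ne h _ _

theorem spinFlip_apply_self (η : V → Bool) (u : V) : spinFlip η u u = !η u :=
  Function.update_self _ _ _

theorem spinFlip_eq_iff [Fintype V] {η η' : V → Bool} {u : V} :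
    spinFlip η u = η' ↔ (univ.filter fun w => η w ≠ η' w) = {u} := by
  simp only [Finset.ext_iff, mem_filter, mem_univ, true_and, mem_singleton, funext_iff,
    spinFlip, Function.update_apply]
  refine forall_congr' fun w => ?_
  by_cases hw : w = u
  · subst hw
    cases η w <;> cases η' w <;> simp
  · simp [hw]

end SpinFlip

def spinIndicator (V : Type*) : Matrix (V → Bool) V ℝ :=
  Matrix.of fun η v => if η v = true then 1 else 0

theorem spinIndicator_apply_const_true (V : Type*) : spinIndicator V (fun _ => true) = 1 := by
  ext v
  simp [spinIndicator]

theorem SimpleGraph.card_adj_and_add_card_adj_and_not {V : Type*} [Fintype V] (G : SimpleGraph V)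
    [DecidableRel G.Adj] (v : V) (p : V → Prop) [DecidablePred p] :
    #{u | G.Adj v u ∧ p u} + #{u | G.Adj v u ∧ ¬p u} = G.degree v := by
  rw [← filter_filter, ← filter_filter, card_filter_add_card_filter_not,
    ← neighborFinset_eq_filter, card_neighborFinset_eq_degree]

noncomputable section DisagreementChain

open Matrix

variable {V : Type*} [Fintype V] [DecidableEq V] (G : SimpleGraph V) [DecidableRel G.Adj] (δ : ℝ)

theorem dzQ_apply (η η' : V → Bool) :
    dzQ G δ η η' = (if η = η' then -∑ u, dzRate G δ u η else 0) +
      ∑ u, if spinFlip η u = η' then dzRate G δ u η else 0 := by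
  simp only [spinFlip_eq_iff]
  by_cases hη : η = η'
  · subst hη
    simp [dzQ, Finset.ext_iff]
  rw [dzQ, if_neg hη, if_neg hη, zero_add]
  split_ifs with hcard
  · obtain ⟨u, hu⟩ := card_eq_one.1 hcard
    simp [hu]
  · refine (sum_eq_zero fun u _ => if_neg fun hu => hcard ?_).symm
    rw [hu, card_singleton]

theorem dzQ_mulVec_apply (f : (V → Bool) → ℝ) (η : V → Bool) :
    (dzQ G δ *ᵥ f) η = ∑ u, dzRate G δ u η * (f (spinFlip η u) - f η) := by
  simp only [mulVec, dotProduct, dzQ_apply, add_mul, sum_add_distrib, ite_mul, zero_mul,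
    sum_ite_eq, mem_univ, if_true, sum_mul]
  rw [Finset.sum_comm]
  simp only [sum_ite_eq, mem_univ, if_true, mul_sub, sum_sub_distrib, neg_mul, sum_mul]
  ring

def dzDrift : Matrix V V ℝ :=
  of fun u v => 1 / (2 * δ + 1) * (1 / (G.degree v : ℝ)) * (if G.Adj v u then 1 else 0) -
    (if u = v then 1 else 0)

theorem dzQ_mul_spinIndicator_apply (η : V → Bool) (v : V) :
    (dzQ G δ * spinIndicator V) η v = dzRate G δ v η * (if η v = true then -1 else 1) := by
  have h := dzQ_mulVec_apply G δ (fun η => spinIndicator V η v) η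
  simp only [mulVec, dotProduct] at h
  rw [mul_apply, h, sum_eq_single v]
  · cases hv : η v <;> simp [spinIndicator, spinFlip_apply_self, hv]
  · intro u _ hu
    simp [spinIndicator, spinFlip_apply_of_ne η (Ne.symm hu)]
  · simp

theorem spinIndicator_mul_dzDrift_apply (η : V → Bool) (v : V) :
    (spinIndicator V * dzDrift G δ) η v = 1 / (2 * δ + 1) * (1 / (G.degree v : ℝ)) *
      #{u | G.Adj v u ∧ η u = true} - (if η v = true then 1 else 0) := by
  simp only [mul_apply, spinIndicator, dzDrift, of_apply, mul_sub, sum_sub_distrib, mul_ite,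
    mul_one, mul_zero, sum_ite_eq', mem_univ, if_true]
  rw [natCast_card_filter, mul_sum]
  congr 1
  refine sum_congr rfl fun u _ => ?_
  by_cases hu : G.Adj v u <;> by_cases hηu : η u = true <;> simp [hu, hηu, mul_comm]

variable {G δ}

theorem dzQ_mul_spinIndicator (hδ : 2 * δ + 1 ≠ 0) (hdeg : ∀ v, G.degree v ≠ 0) :
    dzQ G δ * spinIndicator V = spinIndicator V * dzDrift G δ := by
  ext η v
  rw [dzQ_mul_spinIndicator_apply, spinIndicator_mul_dzDrift_apply, dzRate]
  have hd : (G.degree v : ℝ) ≠ 0 := Nat.cast_ne_zero.2 (hdeg v)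
  have hcard := G.card_adj_and_add_card_adj_and_not v (fun u => η u = true)
  cases hv : η v
  · simp
  · have hdisagree : (#{u | G.Adj v u ∧ η u ≠ true} : ℝ) =
        G.degree v - #{u | G.Adj v u ∧ η u = true} := by
      rw [← hcard]
      push_cast
      ring
    simp only [if_true, hdisagree]
    field_simp
    ring

theorem vecMul_one_dzDrift (hδ : 2 * δ + 1 ≠ 0) (hdeg : ∀ v, G.degree v ≠ 0) :
    (1 : V → ℝ) ᵥ* dzDrift G δ = -(2 * δ / (2 * δ + 1)) • (1 : V → ℝ) := by
  ext v
  simp only [vecMul, dotProduct, Pi.one_apply, one_mul, dzDrift, of_apply, sum_sub_distrib,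
    ← mul_sum, sum_boole, filter_eq', mem_univ, if_true, card_singleton,
    ← SimpleGraph.neighborFinset_eq_filter, SimpleGraph.card_neighborFinset_eq_degree,
    Pi.smul_apply, smul_eq_mul, mul_one]
  have hd : (G.degree v : ℝ) ≠ 0 := Nat.cast_ne_zero.2 (hdeg v)
  field_simp
  ring

theorem probDisagree_eq_exp_mul_spinIndicator_apply (t : ℝ) (v : V) :
    probDisagree G δ t v =
      (NormedSpace.exp (t • dzQ G δ) * spinIndicator V) (fun _ => true) v := by
  simp [probDisagree, mul_apply, spinIndicator, sum_filter]

/- `NormedSpace.exp` only sees the entrywise topology; the operator norm is borrowed to make the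
exponential series converge. -/
attribute [local instance] Matrix.linftyOpNormedRing Matrix.linftyOpNormedAlgebra in
theorem probDisagree_eq_exp (hδ : 2 * δ + 1 ≠ 0) (hdeg : ∀ v, G.degree v ≠ 0) (t : ℝ) (v : V) :
    probDisagree G δ t v = Real.exp (-(2 * δ / (2 * δ + 1)) * t) := by
  let L : Matrix (V → Bool) (V → Bool) ℝ →L[ℝ] ℝ := LinearMap.toContinuousLinearMap
    (entryLinearMap ℝ ℝ (fun _ => true) v ∘ₗ mulRightLinearMap (V → Bool) ℝ (spinIndicator V))
  rw [probDisagree_eq_exp_mul_spinIndicator_apply]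
  refine L.map_exp_of_map_pow fun n => ?_
  change ((t • dzQ G δ) ^ n * spinIndicator V) (fun _ => true) v = _
  rw [smul_pow, Matrix.smul_mul, pow_mul_eq_mul_pow_of_mul_eq (dzQ_mul_spinIndicator hδ hdeg),
    Matrix.smul_apply, mul_apply_eq_vecMul, spinIndicator_apply_const_true,
    vecMul_pow_of_vecMul_eq_smul (vecMul_one_dzDrift hδ hdeg)]
  simp only [Pi.smul_apply, Pi.one_apply, smul_eq_mul, mul_one]
  ring

end DisagreementChain

theorem disagreement_probability_decay_general
    {V : Type*} [Fintype V] [DecidableEq V] (δ : ℝ) (hδ : 0 < δ)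
    (G : SimpleGraph V) [DecidableRel G.Adj] (hdeg : ∀ v, 1 ≤ G.degree v)
    (t : ℝ) (v : V) :
    probDisagree G δ t v ≤ Real.exp (-(2 * δ / (2 * δ + 1)) * t) :=
  (probDisagree_eq_exp (by positivity) (fun v => by have := hdeg v; omega) t v).le

/-- For the disagreement chain of the noisy voter model started from the all-ones
configuration, the probability of disagreement at any site decays exponentially:
`max_v P(Z_t(v) = 1) ≤ exp(−(2δ/(2δ+1))·t)` for every `t ≥ 0`. -/
theorem disagreement_probability_decay
    {V : Type*} [Fintype V] [DecidableEq V] (δ : ℝ) (hδ : 0 < δ)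
    (G : SimpleGraph V) [DecidableRel G.Adj] (hdeg : ∀ v, 1 ≤ G.degree v)
    (t : ℝ) (ht : 0 ≤ t) (v : V) :
    probDisagree G δ t v ≤ Real.exp (-(2 * δ / (2 * δ + 1)) * t) :=
  disagreement_probability_decay_general δ hδ G hdeg t v
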